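/- arXiv:2502.21240 — 2 statements merged into one kernel-verified Lean document; each statement's English description precedes it below -/
import Mathlib

section
/- Let T be a rooted spanning tree on vertex set [n] and let R be a collection of m subsets of [n]. For each range r ∈ R, its crossing number in T is the number of tree edges with exactly one endpoint in r. If the crossing number of T (the total number of crossings summed over all ranges in R) is κ, then the linear tree T' obtained by listing the vertices in the order of a depth-first-search in-order traversal of T (i.e., the path π(1)–π(2)–…–π(n)) has crossing number at most 2κ. -/
open scoped Classical

namespace Stmt0Aux

variable {α : Type*}

noncomputable def cross (r : Finset α) : List α → ℕ
  | [] => 0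
  | [_] => 0
  | a :: b :: t => (if ((a ∈ r) ↔ (b ∉ r)) then 1 else 0) + cross r (b :: t)

lemma cross_nil (r : Finset α) : cross r ([] : List α) = 0 := rfl
lemma cross_single (r : Finset α) (a : α) : cross r [a] = 0 := rfl
lemma cross_cons_cons (r : Finset α) (a b : α) (t : List α) :
    cross r (a :: b :: t) = (if ((a ∈ r) ↔ (b ∉ r)) then 1 else 0) + cross r (b :: t) := rfl

lemma cross_append (r : Finset α) (xs ys : List α) (y : α) :
    cross r (xs ++ y :: ys) = cross r (xs ++ [y]) + cross r (y :: ys) := by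
  induction xs with
  | nil => simp [cross_single]
  | cons a xs ih =>
    cases xs with
    | nil => simp [cross_cons_cons, cross_single]
    | cons b xs =>
      simp only [List.cons_append] at *
      rw [cross_cons_cons, cross_cons_cons, ih]
      omega

lemma cross_insert_le (r : Finset α) (xs ys : List α) (a b : α) :
    cross r (xs ++ a :: b :: ys) ≤
      cross r (xs ++ a :: ys) + 2 * (if ((a ∈ r) ↔ (b ∉ r)) then 1 else 0) := by
  rw [cross_append r xs (b :: ys) a, cross_append r xs ys a, cross_cons_cons]
  have h : cross r (b :: ys) ≤ cross r (a :: ys) + (if ((a ∈ r) ↔ (b ∉ r)) then 1 else 0) := by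
    cases ys with
    | nil => rw [cross_single]; exact Nat.zero_le _
    | cons c t =>
      rw [cross_cons_cons, cross_cons_cons]
      have : (if ((b ∈ r) ↔ (c ∉ r)) then 1 else 0) ≤
          (if ((a ∈ r) ↔ (c ∉ r)) then 1 else 0) + (if ((a ∈ r) ↔ (b ∉ r)) then 1 else 0) := by
        by_cases ha : a ∈ r <;> by_cases hb : b ∈ r <;> by_cases hc : c ∈ r <;> simp [ha, hb, hc]
      omega
  omega

variable {α : Type*}

noncomputable def depth (parent : α → α) (root : α) (z : α) : ℕ :=
  if h : ∃ k, parent^[k] z = root then Nat.find h else 0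

lemma depth_parent_lt (parent : α → α) (root : α) (z : α)
    (hz : ∃ k, parent^[k] z = root) (hzr : z ≠ root) :
    depth parent root (parent z) < depth parent root z := by
  have hk : parent^[Nat.find hz] z = root := Nat.find_spec hz
  have hpos : 0 < Nat.find hz := by
    rcases Nat.eq_zero_or_pos (Nat.find hz) with h | h
    · exfalso; apply hzr; simpa [h] using hk
    · exact h
  have hp : parent^[Nat.find hz - 1] (parent z) = root := by
    have : parent^[(Nat.find hz - 1) + 1] z = root := by
      rwa [Nat.sub_add_cancel hpos]
    rwa [Function.iterate_succ_apply] at this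
  have hpe : ∃ k, parent^[k] (parent z) = root := ⟨_, hp⟩
  have h1 : depth parent root (parent z) ≤ Nat.find hz - 1 := by
    rw [depth, dif_pos hpe]
    exact Nat.find_le hp
  have h2 : depth parent root z = Nat.find hz := by rw [depth, dif_pos hz]
  omega

lemma key [DecidableEq α] (parent : α → α) (root : α) (hr : parent root = root) :
    ∀ s : Finset α, root ∈ s → (∀ z ∈ s, parent z ∈ s) →
      (∀ z ∈ s, ∃ k, parent^[k] z = root) →
      ∃ l : List α, l.Nodup ∧ l.toFinset = s ∧
        ∀ r : Finset α, cross r l ≤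
          2 * (s.filter (fun z => z ≠ root ∧ ((z ∈ r) ↔ parent z ∉ r))).card := by
  classical
  intro s
  induction s using Finset.strongInduction with
  | _ s ih =>
    intro hroot hmem htree
    by_cases hs : s = {root}
    · exact ⟨[root], by simp, by simp [hs], fun r => by simp [cross_single]⟩
    · have hex : ∃ x ∈ s, x ≠ root := by
        by_contra h
        push_neg at h
        exact hs (Finset.eq_singleton_iff_unique_mem.mpr ⟨hroot, h⟩)
      have hne : (s.erase root).Nonempty := by
        obtain ⟨x, hx, hxr⟩ := hex
        exact ⟨x, Finset.mem_erase.mpr ⟨hxr, hx⟩⟩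
      obtain ⟨v, hv, hmax⟩ := Finset.exists_max_image (s.erase root) (depth parent root) hne
      have hvroot : v ≠ root := (Finset.mem_erase.mp hv).1
      have hvs : v ∈ s := (Finset.mem_erase.mp hv).2
      have hleaf : ∀ u ∈ s, parent u ≠ v := by
        intro u hu hpu
        by_cases hur : u = root
        · exact hvroot (by rw [← hpu, hur, hr])
        · have h1 := depth_parent_lt parent root u (htree u hu) hur
          rw [hpu] at h1
          have h2 := hmax u (Finset.mem_erase.mpr ⟨hur, hu⟩)
          omega
      have hpvv : parent v ≠ v := by
        intro h
        obtain ⟨k, hk⟩ := htree v hvs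
        exact hvroot (by rw [← hk, Function.iterate_fixed h k])
      have hroot' : root ∈ s.erase v := Finset.mem_erase.mpr ⟨Ne.symm hvroot, hroot⟩
      have hmem' : ∀ z ∈ s.erase v, parent z ∈ s.erase v := by
        intro z hz
        have hz' := (Finset.mem_erase.mp hz).2
        exact Finset.mem_erase.mpr ⟨hleaf z hz', hmem z hz'⟩
      have htree' : ∀ z ∈ s.erase v, ∃ k, parent^[k] z = root :=
        fun z hz => htree z (Finset.mem_erase.mp hz).2
      obtain ⟨l, hnd, hlf, hbound⟩ :=
        ih (s.erase v) (Finset.erase_ssubset hvs) hroot' hmem' htree'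
      have hpv : parent v ∈ s.erase v :=
        Finset.mem_erase.mpr ⟨hpvv, hmem v hvs⟩
      have hpvl : parent v ∈ l := by
        rw [← List.mem_toFinset, hlf]; exact hpv
      obtain ⟨l₁, l₂, hl⟩ := List.append_of_mem hpvl
      have hperm : (l₁ ++ parent v :: v :: l₂).Perm (v :: l) := by
        have h1 : l₁ ++ parent v :: v :: l₂ = (l₁ ++ [parent v]) ++ v :: l₂ := by simp
        have h2 : (l₁ ++ [parent v]) ++ l₂ = l := by simp [hl]
        rw [h1]
        exact h2 ▸ List.perm_middle
      have hvl : v ∉ l := by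
        rw [← List.mem_toFinset, hlf]
        simp
      refine ⟨l₁ ++ parent v :: v :: l₂, ?_, ?_, ?_⟩
      · exact hperm.nodup_iff.mpr (List.nodup_cons.mpr ⟨hvl, hnd⟩)
      · rw [List.toFinset_eq_of_perm _ _ hperm, List.toFinset_cons, hlf, Finset.insert_erase hvs]
      · intro r
        have h1 := cross_insert_le r l₁ l₂ (parent v) v
        rw [← hl] at h1
        have h2 := hbound r
        have hPv : (v ≠ root ∧ ((v ∈ r) ↔ parent v ∉ r)) ↔ ((parent v ∈ r) ↔ (v ∉ r)) := by
          simp only [hvroot, ne_eq, not_false_iff, true_and]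
          tauto
        have hsplit : (s.filter (fun z => z ≠ root ∧ ((z ∈ r) ↔ parent z ∉ r))).card =
            ((s.erase v).filter (fun z => z ≠ root ∧ ((z ∈ r) ↔ parent z ∉ r))).card +
              (if ((parent v ∈ r) ↔ (v ∉ r)) then 1 else 0) := by
          conv_lhs => rw [← Finset.insert_erase hvs]
          rw [Finset.filter_insert]
          by_cases hc : (v ≠ root ∧ ((v ∈ r) ↔ parent v ∉ r))
          · rw [if_pos hc, if_pos (hPv.mp hc),
              Finset.card_insert_of_notMem (fun hmem2 => by
                have := Finset.mem_of_mem_filter v hmem2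
                simp at this)]
          · rw [if_neg hc, if_neg (fun h => hc (hPv.mpr h))]
            ring
        by_cases hite : ((parent v ∈ r) ↔ (v ∉ r))
        · rw [if_pos hite] at h1 hsplit
          omega
        · rw [if_neg hite] at h1 hsplit
          omega

lemma cross_eq_card (r : Finset α) (l : List α) :
    (Finset.univ.filter (fun i : Fin l.length =>
      ∃ h : (i : ℕ) + 1 < l.length,
        ((l.get i ∈ r) ↔ (l.get ⟨(i : ℕ) + 1, h⟩ ∉ r)))).card = cross r l := by
  induction l with
  | nil => simp [cross_nil]
  | cons a t ih =>
    rw [Finset.card_filter]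
    simp only [List.length_cons]
    rw [Fin.sum_univ_succ]
    cases t with
    | nil =>
      rw [cross_single]
      split_ifs with h
      · rcases h with ⟨h, -⟩
        simp at h
      · rw [Nat.zero_add]
        apply Finset.sum_eq_zero
        intro x _
        exact absurd x.isLt (by simp)
    | cons b t' =>
      rw [cross_cons_cons, ← ih, Finset.card_filter]
      refine congrArg₂ (· + ·) (if_congr ?_ rfl rfl) (Finset.sum_congr rfl fun i _ => if_congr ?_ rfl rfl)
      · constructor
        · rintro ⟨h, hc⟩
          simpa using hc
        · intro h
          exact ⟨by simp, by simpa using h⟩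
      · constructor
        · rintro ⟨h, hc⟩
          have h' : (i : ℕ) + 1 < (b :: t').length := by
            simp only [List.length_cons, Fin.val_succ] at h ⊢; omega
          refine ⟨h', ?_⟩
          simpa using hc
        · rintro ⟨h, hc⟩
          have h' : ((i.succ : Fin ((b :: t').length + 1)) : ℕ) + 1 < (b :: t').length + 1 := by
            simp only [List.length_cons, Fin.val_succ] at h ⊢; omega
          refine ⟨h', ?_⟩
          simpa using hc

lemma cross_eq_card' (r : Finset α) (l : List α) {n : ℕ} (hl : l.length = n) :
    (Finset.univ.filter (fun i : Fin n =>
      ∃ h : (i : ℕ) + 1 < n,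
        ((l.get (Fin.cast hl.symm i) ∈ r) ↔ (l.get (Fin.cast hl.symm ⟨(i : ℕ) + 1, h⟩) ∉ r)))).card
      = cross r l := by
  subst hl
  simpa using cross_eq_card r l

lemma cross_eq_card2 (r : Finset α) (l : List α) {n : ℕ} (hl : l.length = n)
    (f : Fin n → α) (hf : ∀ i : Fin n, f i = l.get (Fin.cast hl.symm i)) :
    (Finset.univ.filter (fun i : Fin n =>
      ∃ h : (i : ℕ) + 1 < n, ((f i ∈ r) ↔ (f ⟨(i : ℕ) + 1, h⟩ ∉ r)))).card = cross r l := by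
  rw [← cross_eq_card' r l hl]
  congr 1
  apply Finset.filter_congr
  intro i _
  constructor
  · rintro ⟨h, hc⟩
    exact ⟨h, by rwa [hf, hf] at hc⟩
  · rintro ⟨h, hc⟩
    exact ⟨h, by rw [hf, hf]; exact hc⟩

lemma card_filter_irrel {ι : Type*} (s : Finset ι) (p : ι → Prop) (h1 h2 : DecidablePred p) :
    (@Finset.filter ι p h1 s).card = (@Finset.filter ι p h2 s).card := by
  have : h1 = h2 := Subsingleton.elim _ _
  subst this
  rfl

lemma msum_le {ι : Type*} (m : Multiset ι) (f g : ι → ℕ) (h : ∀ i ∈ m, f i ≤ g i) :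
    (m.map f).sum ≤ (m.map g).sum := by
  induction m using Multiset.induction with
  | empty => simp
  | cons a t ih =>
    simp only [Multiset.map_cons, Multiset.sum_cons]
    exact Nat.add_le_add (h a (by simp)) (ih fun i hi => h i (by simp [hi]))

end Stmt0Aux

/-- Given a rooted spanning tree on `Fin n` (encoded by a parent
function, every vertex reaching the root) and a multiset `R` of ranges, if the
total crossing number of the tree is `κ`, then there is a listing of the
vertices (a permutation, as produced by a DFS in-order traversal) such that the
linear tree (path) `π(0) – π(1) – ⋯ – π(n-1)` has total crossing number at most
`2κ`. -/
theorem stmt0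
    (n : ℕ) (hn : 1 ≤ n)
    (parent : Fin n → Fin n) (root : Fin n)
    (hroot : parent root = root)
    (htree : ∀ z : Fin n, ∃ k : ℕ, parent^[k] z = root)
    (R : Multiset (Finset (Fin n)))
    (κ : ℕ)
    (hκ : (R.map (fun r =>
        (Finset.univ.filter (fun v : Fin n =>
          v ≠ root ∧ ((v ∈ r) ↔ (parent v ∉ r)))).card)).sum = κ) :
    ∃ π : Equiv.Perm (Fin n),
      (R.map (fun r =>
        (Finset.univ.filter (fun i : Fin n =>
          ∃ h : (i : ℕ) + 1 < n,
            ((π i ∈ r) ↔ (π ⟨(i : ℕ) + 1, h⟩ ∉ r)))).card)).sum ≤ 2 * κ := by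
  obtain ⟨l, hnd, hlf, hbound⟩ := Stmt0Aux.key parent root hroot Finset.univ
    (Finset.mem_univ root) (fun z _ => Finset.mem_univ _) (fun z _ => htree z)
  have hlen : l.length = n := by
    have h1 := List.toFinset_card_of_nodup hnd
    rw [hlf] at h1
    simpa [Finset.card_univ] using h1.symm
  have hinj : Function.Injective (fun i : Fin n => l.get (Fin.cast hlen.symm i)) := by
    intro i j hij
    have h2 := List.nodup_iff_injective_get.mp hnd hij
    have h3 := congrArg Fin.val h2
    exact Fin.ext h3
  refine ⟨Equiv.ofBijective _ (Finite.injective_iff_bijective.mp hinj), ?_⟩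
  subst hκ
  calc (R.map (fun r =>
        (Finset.univ.filter (fun i : Fin n =>
          ∃ h : (i : ℕ) + 1 < n,
            ((Equiv.ofBijective _ (Finite.injective_iff_bijective.mp hinj) i ∈ r) ↔
              (Equiv.ofBijective _ (Finite.injective_iff_bijective.mp hinj)
                ⟨(i : ℕ) + 1, h⟩ ∉ r)))).card)).sum
      ≤ (R.map (fun r => 2 * (Finset.univ.filter (fun v : Fin n =>
          v ≠ root ∧ ((v ∈ r) ↔ (parent v ∉ r)))).card)).sum := by
        apply Stmt0Aux.msum_le
        intro r _
        have h3 := Stmt0Aux.cross_eq_card2 r l hlen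
          (⇑(Equiv.ofBijective _ (Finite.injective_iff_bijective.mp hinj)))
          (fun i => rfl)
        refine le_of_eq_of_le (Eq.trans ?_ h3) (hbound r)
        exact Stmt0Aux.card_filter_irrel _ _ _ _
    _ = 2 * (R.map (fun r => (Finset.univ.filter (fun v : Fin n =>
          v ≠ root ∧ ((v ∈ r) ↔ (parent v ∉ r)))).card)).sum :=
        Multiset.sum_map_mul_left
end

section
/- Suppose that for every subset A ⊆ X with |A| ≥ 2 and every finite multiset Q of ranges with |Q| = m, there exist two distinct elements x, y ∈ A such that at most f(|A|) ranges in Q cross the pair (x,y), where f is nonincreasing. Then there exists a spanning tree T on X (|X| = n) whose total crossing number (summed over all m ranges) is at most Σ_{k=2}^{n} f(k). -/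
open scoped Classical

/-!
Greedy construction: in the current set `A` pick the pair `x ≠ y` crossed by at most `f |A|`
ranges, attach `x` to `y` as a leaf and recurse on `A \ {x}`. The set shrinks through the sizes
`n, n - 1, …, 2`, so the tree costs at most `∑_{k=2}^n f k`. Counting crossings edge by edge
(`crossingNumber`) makes attaching a leaf additive; the bound is stated range by range, and
the two agree by double counting.
-/

lemma Multiset.sum_map_ite_one_zero {α : Type*} (s : Multiset α) (p : α → Prop)
    [DecidablePred p] : (s.map fun a => if p a then 1 else 0).sum = s.countP p := by
  induction s using Multiset.induction with
  | empty => simp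
  | cons a s ih => simp [Multiset.countP_cons, ih, add_comm]

namespace LowCrossingTree

open SimpleGraph

variable {V : Type*}

def Crosses (r : Finset V) (x y : V) : Prop := (x ∈ r ∧ y ∉ r) ∨ (x ∉ r ∧ y ∈ r)

def EdgeCrosses (r : Finset V) (e : Sym2 V) : Prop := ∃ x y, e = s(x, y) ∧ Crosses r x y

lemma crosses_comm {r : Finset V} {x y : V} : Crosses r x y ↔ Crosses r y x := by
  unfold Crosses; tauto

@[simp]
lemma edgeCrosses_mk {r : Finset V} {x y : V} : EdgeCrosses r s(x, y) ↔ Crosses r x y := by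
  refine ⟨?_, fun h => ⟨x, y, rfl, h⟩⟩
  rintro ⟨a, b, hab, h⟩
  rcases Sym2.eq_iff.mp hab with ⟨rfl, rfl⟩ | ⟨rfl, rfl⟩
  exacts [h, crosses_comm.mp h]

noncomputable def crossingNumber (Q : Multiset (Finset V)) (E : Finset (Sym2 V)) : ℕ :=
  ∑ e ∈ E, Q.countP (EdgeCrosses · e)

lemma sum_map_card_filter_eq_crossingNumber (Q : Multiset (Finset V)) (E : Finset (Sym2 V)) :
    (Q.map fun r => (E.filter (EdgeCrosses r)).card).sum = crossingNumber Q E := by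
  simp only [Finset.card_filter, Multiset.sum_map_sum, crossingNumber]
  exact Finset.sum_congr rfl fun e _ => Multiset.sum_map_ite_one_zero Q _

structure IsTreeOn (A : Finset V) (E : Finset (Sym2 V)) : Prop where
  not_isDiag : ∀ e ∈ E, ¬ e.IsDiag
  mem_of_mem : ∀ e ∈ E, ∀ v ∈ e, v ∈ A
  card_eq : E.card = A.card - 1
  reachable : ∀ a ∈ A, ∀ b ∈ A, (fromEdgeSet (E : Set (Sym2 V))).Reachable a b

lemma isTreeOn_singleton (a : V) : IsTreeOn {a} ∅ where
  not_isDiag := by simp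
  mem_of_mem := by simp
  card_eq := by simp
  reachable := by
    simp only [Finset.mem_singleton]
    rintro a rfl b rfl
    rfl

lemma IsTreeOn.mk_notMem {A : Finset V} {E : Finset (Sym2 V)} (hE : IsTreeOn A E) {x : V}
    (hx : x ∉ A) (y : V) : s(x, y) ∉ E :=
  fun h => hx (hE.mem_of_mem _ h x (Sym2.mem_mk_left x y))

lemma IsTreeOn.edgeSet_fromEdgeSet {A : Finset V} {E : Finset (Sym2 V)} (hE : IsTreeOn A E) :
    (fromEdgeSet (E : Set (Sym2 V))).edgeSet = E := by
  rw [SimpleGraph.edgeSet_fromEdgeSet, sdiff_eq_left, Set.disjoint_left]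
  exact hE.not_isDiag

lemma IsTreeOn.connected_fromEdgeSet [Fintype V] [Nonempty V] {E : Finset (Sym2 V)}
    (hE : IsTreeOn Finset.univ E) : (fromEdgeSet (E : Set (Sym2 V))).Connected :=
  .mk fun a b => hE.reachable a (Finset.mem_univ a) b (Finset.mem_univ b)

lemma IsTreeOn.insert_leaf {A : Finset V} {E : Finset (Sym2 V)} (hE : IsTreeOn A E) {x y : V}
    (hx : x ∉ A) (hy : y ∈ A) : IsTreeOn (insert x A) (insert s(x, y) E) := by
  have hxy : x ≠ y := fun h => hx (h ▸ hy)
  have hxyE : s(x, y) ∉ E := hE.mk_notMem hx y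
  set G := fromEdgeSet (↑(insert s(x, y) E) : Set (Sym2 V))
  have reachable_x : ∀ a ∈ insert x A, G.Reachable x a := by
    have hmono : fromEdgeSet (E : Set (Sym2 V)) ≤ G :=
      fromEdgeSet_mono (by simp [Set.subset_insert])
    have hadj : G.Adj x y := by simp [G, fromEdgeSet_adj, hxy]
    rintro a ha
    rcases Finset.mem_insert.mp ha with rfl | ha
    · rfl
    · exact hadj.reachable.trans ((hE.reachable y hy a ha).mono hmono)
  refine ⟨?_, ?_, ?_, fun a ha b hb => (reachable_x a ha).symm.trans (reachable_x b hb)⟩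
  · simpa [hxy] using hE.not_isDiag
  · intro e he v hv
    rcases Finset.mem_insert.mp he with rfl | he
    · rcases Sym2.mem_iff.mp hv with rfl | rfl <;> simp [hy]
    · exact Finset.mem_insert_of_mem (hE.mem_of_mem e he v hv)
  · have : 0 < A.card := Finset.card_pos.mpr ⟨y, hy⟩
    rw [Finset.card_insert_of_notMem hxyE, Finset.card_insert_of_notMem hx, hE.card_eq]
    omega

lemma crossingNumber_insert (Q : Multiset (Finset V)) {E : Finset (Sym2 V)} {x y : V}
    (h : s(x, y) ∉ E) :
    crossingNumber Q (insert s(x, y) E) = crossingNumber Q E + Q.countP (Crosses · x y) := by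
  simp [crossingNumber, Finset.sum_insert h, add_comm]

theorem exists_isTreeOn_crossingNumber_le (Q : Multiset (Finset V)) (f : ℕ → ℕ)
    (hyp : ∀ A : Finset V, 2 ≤ A.card →
      ∃ x ∈ A, ∃ y ∈ A, x ≠ y ∧ Q.countP (Crosses · x y) ≤ f A.card)
    (A : Finset V) (hA : A.Nonempty) :
    ∃ E, IsTreeOn A E ∧ crossingNumber Q E ≤ ∑ k ∈ Finset.Icc 2 A.card, f k := by
  induction A using Finset.strongInduction with
  | H A ih =>
  obtain hA1 | hA2 := le_or_gt A.card 1
  · obtain ⟨a, rfl⟩ := Finset.card_eq_one.mp (le_antisymm hA1 hA.card_pos)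
    exact ⟨∅, isTreeOn_singleton a, by simp [crossingNumber]⟩
  obtain ⟨x, hx, y, hy, hxy, hcross⟩ := hyp A hA2
  have hyA' : y ∈ A.erase x := Finset.mem_erase.mpr ⟨hxy.symm, hy⟩
  obtain ⟨E, hE, hEcross⟩ := ih (A.erase x) (Finset.erase_ssubset hx) ⟨y, hyA'⟩
  refine ⟨insert s(x, y) E, ?_, ?_⟩
  · simpa [Finset.insert_erase hx] using hE.insert_leaf (Finset.notMem_erase x A) hyA'
  · have hcard : A.card = (A.erase x).card + 1 := (Finset.card_erase_add_one hx).symm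
    rw [crossingNumber_insert Q (hE.mk_notMem (Finset.notMem_erase x A) y), hcard,
      Finset.sum_Icc_succ_top (by omega)]
    exact add_le_add hEcross (hcard ▸ hcross)

end LowCrossingTree

open LowCrossingTree SimpleGraph in
theorem stmt6_general
    (V : Type*) [Fintype V] [DecidableEq V]
    (n : ℕ) (hn : Fintype.card V = n) (hn2 : 2 ≤ n)
    (Q : Multiset (Finset V))
    (f : ℕ → ℕ)
    (hyp : ∀ A : Finset V, 2 ≤ A.card →
      ∃ x ∈ A, ∃ y ∈ A, x ≠ y ∧
        Multiset.card (Q.filter (fun r : Finset V =>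
          (x ∈ r ∧ y ∉ r) ∨ (x ∉ r ∧ y ∈ r))) ≤ f A.card) :
    ∃ G : SimpleGraph V, G.Connected ∧
      (Finset.univ.filter (fun e : Sym2 V => e ∈ G.edgeSet)).card = n - 1 ∧
      (Q.map (fun r : Finset V =>
        (Finset.univ.filter (fun e : Sym2 V => e ∈ G.edgeSet ∧
          ∃ x y : V, e = s(x, y) ∧ ((x ∈ r ∧ y ∉ r) ∨ (x ∉ r ∧ y ∈ r)))).card)).sum
        ≤ ∑ k ∈ Finset.Icc 2 n, f k := by
  have hne : (Finset.univ : Finset V).Nonempty := Finset.card_pos.mp (by simp; omega)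
  have hpair : ∀ A : Finset V, 2 ≤ A.card →
      ∃ x ∈ A, ∃ y ∈ A, x ≠ y ∧ Q.countP (Crosses · x y) ≤ f A.card := by
    intro A hA
    obtain ⟨x, hx, y, hy, hxy, hcross⟩ := hyp A hA
    refine ⟨x, hx, y, hy, hxy, ?_⟩
    rw [Multiset.countP_eq_card_filter]
    convert hcross
    rfl
  obtain ⟨E, hE, hcross⟩ := exists_isTreeOn_crossingNumber_le Q f hpair Finset.univ hne
  have : Nonempty V := hne.to_type
  refine ⟨fromEdgeSet E, hE.connected_fromEdgeSet, ?_, ?_⟩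
  · simp [hE.edgeSet_fromEdgeSet, hE.card_eq, hn]
  · convert (sum_map_card_filter_eq_crossingNumber Q E).trans_le hcross using 4 with r
    · ext e
      simp [hE.edgeSet_fromEdgeSet, EdgeCrosses, Crosses]
    · simp [hn]

/-- Greedy construction of a low-crossing spanning tree. If for
every subset `A` with `|A| ≥ 2` of a ground set `X` (with `|X| = n`) there are
two distinct elements `x, y ∈ A` crossed by at most `f(|A|)` of the `m` ranges
in the multiset `Q` (`f` nonincreasing), then there is a spanning tree on `X`
(a connected graph with `n - 1` edges) whose total crossing number, summed over
all ranges of `Q`, is at most `Σ_{k=2}^{n} f(k)`. -/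
theorem stmt6
    (V : Type*) [Fintype V] [DecidableEq V]
    (n m : ℕ) (hn : Fintype.card V = n) (hn2 : 2 ≤ n)
    (Q : Multiset (Finset V)) (hQ : Multiset.card Q = m)
    (f : ℕ → ℕ) (hf : Antitone f)
    (hyp : ∀ A : Finset V, 2 ≤ A.card →
      ∃ x ∈ A, ∃ y ∈ A, x ≠ y ∧
        Multiset.card (Q.filter (fun r : Finset V =>
          (x ∈ r ∧ y ∉ r) ∨ (x ∉ r ∧ y ∈ r))) ≤ f A.card) :
    ∃ G : SimpleGraph V, G.Connected ∧
      (Finset.univ.filter (fun e : Sym2 V => e ∈ G.edgeSet)).card = n - 1 ∧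
      (Q.map (fun r : Finset V =>
        (Finset.univ.filter (fun e : Sym2 V => e ∈ G.edgeSet ∧
          ∃ x y : V, e = s(x, y) ∧ ((x ∈ r ∧ y ∉ r) ∨ (x ∉ r ∧ y ∈ r)))).card)).sum
        ≤ ∑ k ∈ Finset.Icc 2 n, f k :=
  stmt6_general V n hn hn2 Q f hyp
end
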